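/- Let T be a nonspecial tree of height ω₁. If ◊_T holds, then 2^ℵ₀ ≤ |{t ∈ T : ht(t) ≥ ω}|. -/

import Mathlib

/-!
Code a real `X ⊆ ℕ` by the set of nodes whose height is a natural number in `X`. The nodes at
which `◊_T` guesses this set correctly form a set outside `NS^T`, hence a nonspecial one; as the
finite levels are countably many antichains, some such node `t` has height `≥ ω`. Since `t` has
a predecessor on every finite level, the guess `D t` determines `X`, so `X ↦ t` is injective.
-/

open Set

/-- The first uncountable ordinal `ω₁`. -/
noncomputable def omega1 : Ordinal := Ordinal.omega 1

section TreeDefs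

variable {T : Type*} [PartialOrder T]

/-- In a tree, the set of strict predecessors of any node is linearly ordered. -/
def PredsChain (T : Type*) [PartialOrder T] : Prop :=
  ∀ t : T, IsChain (· ≤ ·) {s : T | s < t}

/-- `ht` is *the* height function of the tree: it is strictly monotone on comparable pairs and
the heights of the strict predecessors of `t` are exactly the ordinals below `ht t`; together
with `PredsChain` this says that the set `t↓` of strict predecessors of `t` is well-ordered
with order type `ht t`. -/
def IsHeightFun (ht : T → Ordinal) : Prop :=
  (∀ s t : T, s < t → ht s < ht t) ∧
  ∀ t : T, ∀ o : Ordinal, o < ht t → ∃ s : T, s < t ∧ ht s = o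

/-- The tree has height `ω₁`: every node has height `< ω₁` and every countable ordinal is the
height of some node. -/
def HeightOmega1 (ht : T → Ordinal) : Prop :=
  (∀ t : T, ht t < omega1) ∧ ∀ o : Ordinal, o < omega1 → ∃ t : T, ht t = o

/-- All levels of the tree are countable. -/
def CountableLevels (ht : T → Ordinal) : Prop :=
  ∀ o : Ordinal, {t : T | ht t = o}.Countable

/-- A tree of height `ω₁` is well-pruned if every node has successors in all later levels. -/
def WellPruned (ht : T → Ordinal) : Prop :=
  ∀ o o' : Ordinal, o < o' → o' < omega1 →
    ∀ s : T, ht s = o → ∃ t : T, s < t ∧ ht t = o'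

/-- A special subset of a tree: a union of countably many antichains. -/
def IsSpecialSet (U : Set T) : Prop :=
  ∃ A : ℕ → Set T, (∀ n : ℕ, IsAntichain (· ≤ ·) (A n)) ∧ U ⊆ ⋃ n, A n

/-- Membership in the ideal `NS^T`: there is a regressive map on `B` all of whose fibers
are special. -/
def InNS [OrderBot T] (B : Set T) : Prop :=
  ∃ f : T → T, (∀ t ∈ B, t ≠ ⊥ → f t < t) ∧
    ∀ t : T, IsSpecialSet {s : T | s ∈ B ∧ f s = t}

/-- The diamond principle `◊_T` for a tree `T`. -/
def DiamondTree (T : Type*) [PartialOrder T] [OrderBot T] : Prop :=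
  ∃ D : T → Set T, (∀ t : T, D t ⊆ Set.Iio t) ∧
    ∀ X : Set T, ¬ InNS {t : T | X ∩ Set.Iio t = D t}

end TreeDefs

/-- Club subsets of `ω₁`: closed and unbounded in `ω₁`. -/
def IsClubIn (C : Set Ordinal) : Prop :=
  C ⊆ Set.Iio omega1 ∧
  (∀ o : Ordinal, o < omega1 → ∃ b ∈ C, o < b) ∧
  ∀ o : Ordinal, o < omega1 → (C ∩ Set.Iio o).Nonempty →
    IsLUB (C ∩ Set.Iio o) o → o ∈ C

/-- Stationary subsets of `ω₁`: sets meeting every club. -/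
def IsStationaryIn (S : Set Ordinal) : Prop :=
  ∀ C : Set Ordinal, IsClubIn C → (S ∩ C).Nonempty

/-- The diamond principle `◊(S)` for `S ⊆ ω₁`;  `◊` is `DiamondOn (Set.Iio omega1)`. -/
def DiamondOn (S : Set Ordinal) : Prop :=
  ∃ D : Ordinal → Set Ordinal, (∀ o ∈ S, D o ⊆ Set.Iio o) ∧
    ∀ X : Set Ordinal, X ⊆ Set.Iio omega1 →
      IsStationaryIn {o ∈ S | X ∩ Set.Iio o = D o}

open Cardinal

section TreeLemmas

variable {T : Type*} [PartialOrder T]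

theorem IsSpecialSet.mono {U V : Set T} (hUV : U ⊆ V) (hV : IsSpecialSet V) :
    IsSpecialSet U :=
  let ⟨A, hA, hVA⟩ := hV
  ⟨A, hA, hUV.trans hVA⟩

theorem IsSpecialSet.inNS [OrderBot T] {B : Set T} (hB : IsSpecialSet B) : InNS B :=
  ⟨fun _ => ⊥, fun _ _ hne => bot_lt_iff_ne_bot.2 hne, fun _ => hB.mono fun _ hs => hs.1⟩

variable {ht : T → Ordinal}

theorem IsHeightFun.isAntichain_level (hht : IsHeightFun ht) (o : Ordinal) :
    IsAntichain (· ≤ ·) {t : T | ht t = o} := by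
  intro a ha b hb hab hle
  have hlt := hht.1 a b (lt_of_le_of_ne hle hab)
  rw [ha, hb] at hlt
  exact hlt.false

theorem IsHeightFun.isSpecialSet_setOf_lt_omega0 (hht : IsHeightFun ht) :
    IsSpecialSet {t : T | ht t < Ordinal.omega0} := by
  refine ⟨fun n => {t : T | ht t = n}, fun n => hht.isAntichain_level n, fun t htω => ?_⟩
  obtain ⟨n, hn⟩ := Ordinal.lt_omega0.1 htω
  exact mem_iUnion.2 ⟨n, hn⟩

theorem IsHeightFun.exists_omega0_le_of_not_inNS [OrderBot T] (hht : IsHeightFun ht)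
    {B : Set T} (hB : ¬ InNS B) : ∃ t ∈ B, Ordinal.omega0 ≤ ht t := by
  by_contra! hfin
  exact hB (hht.isSpecialSet_setOf_lt_omega0.mono hfin).inNS

theorem IsHeightFun.injective_preimage_natCast_inter_Iio (hht : IsHeightFun ht) {t : T}
    (hωt : Ordinal.omega0 ≤ ht t) :
    Function.Injective fun X : Set ℕ => ht ⁻¹' ((↑) '' X) ∩ Iio t := by
  intro X Y hXY
  ext n
  obtain ⟨s, hst, hsn⟩ := hht.2 t n ((Ordinal.natCast_lt_omega0 n).trans_le hωt)
  have hs := congrArg (s ∈ ·) hXY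
  simpa [hst, hsn] using hs

end TreeLemmas

theorem stmt9_general {T : Type*} [PartialOrder T] [OrderBot T]
    (ht : T → Ordinal)
    (hht : IsHeightFun ht)
    (hd : DiamondTree T) :
    2 ^ Cardinal.aleph0 ≤ Cardinal.mk {t : T // Ordinal.omega0 ≤ ht t} := by
  obtain ⟨D, -, hD⟩ := hd
  choose t hguess hωt using fun X : Set ℕ =>
    hht.exists_omega0_le_of_not_inNS (hD (ht ⁻¹' ((↑) '' X)))
  have hinj : Function.Injective fun X => (⟨t X, hωt X⟩ : {t : T // Ordinal.omega0 ≤ ht t}) := by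
    intro X Y hXY
    have htXY : t X = t Y := congrArg Subtype.val hXY
    apply hht.injective_preimage_natCast_inter_Iio (hωt X)
    change _ ∩ Iio (t X) = _ ∩ Iio (t X)
    rw [hguess X, htXY, hguess Y]
  simpa using lift_mk_le_lift_mk_of_injective hinj

/-- If `T` is a nonspecial tree of height `ω₁` and `◊_T` holds, then
`2 ^ ℵ₀ ≤ |{t ∈ T : ht t ≥ ω}|`. -/
theorem stmt9 {T : Type*} [PartialOrder T] [OrderBot T]
    (hchain : PredsChain T) (ht : T → Ordinal)
    (hht : IsHeightFun ht) (hΩ : HeightOmega1 ht)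
    (hns : ¬ IsSpecialSet (Set.univ : Set T))
    (hd : DiamondTree T) :
    2 ^ Cardinal.aleph0 ≤ Cardinal.mk {t : T // Ordinal.omega0 ≤ ht t} :=
  stmt9_general ht hht hd
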